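/- Let H be a standard subspace, V a unitary with VH ⊆ H and V = J_H V* J_H, and U := V². Then B_U := U*Δ_H^{1/2} satisfies B_U ⊆ V*Δ_H^{1/2}V, and V*Δ_H^{1/2}V is a positive self-adjoint operator; hence B_U admits a positive self-adjoint extension. -/

import Mathlib

open Complex Submodule Filter Topology

variable {E : Type*} [NormedAddCommGroup E] [InnerProductSpace ℂ E]

/-- Multiplication by `i` as a real-linear map. -/
noncomputable def mulI (E : Type*) [NormedAddCommGroup E] [InnerProductSpace ℂ E] :
    E →ₗ[ℝ] E where
  toFun x := (Complex.I : ℂ) • x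
  map_add' := fun x y => smul_add Complex.I x y
  map_smul' := fun r x => smul_comm Complex.I r x

/-- `H + iH` as a real submodule. -/
noncomputable def cspan (H : Submodule ℝ E) : Submodule ℝ E := H ⊔ H.map (mulI E)

/-- The symplectic complement `K' = {v : Im ⟨v, k⟩ = 0 ∀ k ∈ K}`. -/
noncomputable def sympl (K : Submodule ℝ E) : Submodule ℝ E where
  carrier := {v : E | ∀ k ∈ K, (inner ℂ v k : ℂ).im = 0}
  add_mem' := by
    intro a b ha hb k hk
    simp only [Set.mem_setOf_eq] at *
    rw [inner_add_left, Complex.add_im, ha k hk, hb k hk, add_zero]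
  zero_mem' := by intro k hk; simp
  smul_mem' := by
    intro c v hv k hk
    simp only [Set.mem_setOf_eq] at *
    have h : (c • v : E) = ((c : ℂ)) • v := by
      simp [Complex.coe_smul]
    rw [h, inner_smul_left]
    simp [hv k hk]

/-- The real-orthogonal complement `{v : Re ⟨v, k⟩ = 0 ∀ k ∈ K}`. -/
noncomputable def realPerp (K : Submodule ℝ E) : Submodule ℝ E where
  carrier := {v : E | ∀ k ∈ K, (inner ℂ v k : ℂ).re = 0}
  add_mem' := by
    intro a b ha hb k hk
    simp only [Set.mem_setOf_eq] at *
    rw [inner_add_left, Complex.add_re, ha k hk, hb k hk, add_zero]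
  zero_mem' := by intro k hk; simp
  smul_mem' := by
    intro c v hv k hk
    simp only [Set.mem_setOf_eq] at *
    have h : (c • v : E) = ((c : ℂ)) • v := by
      simp [Complex.coe_smul]
    rw [h, inner_smul_left]
    simp [hv k hk]

/-- A standard subspace: closed, cyclic and separating real subspace. -/
structure IsStandardSubspace (H : Submodule ℝ E) : Prop where
  isClosed : IsClosed (H : Set E)
  cyclic : Dense ((cspan H : Submodule ℝ E) : Set E)
  separating : H ⊓ H.map (mulI E) = ⊥

/-- Scalar multiplication by a complex number as a real-linear map. -/
noncomputable def smulC (E : Type*) [NormedAddCommGroup E] [InnerProductSpace ℂ E]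
    (mu : ℂ) : E →ₗ[ℝ] E where
  toFun x := mu • x
  map_add' := fun x y => smul_add mu x y
  map_smul' := fun r x => smul_comm mu r x

/-
Conjugating by `V` turns the statement into facts about `JS` on `cspan H = H + iH`, which are the
hypotheses. Since `V` is complex linear and maps `H` into `H`, it maps `H + iH` into itself and
commutes with the Tomita operator `S` there. The symmetry `V = J V* J` together with `J² = 1`
gives `V* J = J V`, hence `U* J S = V* (V* J) S = V* J V S = V* J S V` on `H + iH`. Symmetry,
positivity and the range condition `ran (1 + JS) = E` transfer along the unitary `V`.
-/

theorem mem_cspan_iff {H : Submodule ℝ E} {v : E} :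
    v ∈ cspan H ↔ ∃ h₁ ∈ H, ∃ h₂ ∈ H, h₁ + I • h₂ = v := by
  simp only [cspan, Submodule.mem_sup, Submodule.mem_map, exists_exists_and_eq_and]
  rfl

theorem map_mem_cspan_of_mapsTo {H : Submodule ℝ E} (f : E →ₗ[ℂ] E) (hf : ∀ h ∈ H, f h ∈ H)
    {v : E} (hv : v ∈ cspan H) : f v ∈ cspan H := by
  obtain ⟨h₁, hh₁, h₂, hh₂, rfl⟩ := mem_cspan_iff.1 hv
  exact mem_cspan_iff.2 ⟨f h₁, hf h₁ hh₁, f h₂, hf h₂ hh₂, by rw [map_add, map_smul]⟩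

theorem map_comm_of_mapsTo {H : Submodule ℝ E} {S : E → E}
    (hS : ∀ h₁ ∈ H, ∀ h₂ ∈ H, S (h₁ + I • h₂) = h₁ - I • h₂)
    (f : E →ₗ[ℂ] E) (hf : ∀ h ∈ H, f h ∈ H) {v : E} (hv : v ∈ cspan H) :
    f (S v) = S (f v) := by
  obtain ⟨h₁, hh₁, h₂, hh₂, rfl⟩ := mem_cspan_iff.1 hv
  rw [hS h₁ hh₁ h₂ hh₂, map_add, map_smul, hS _ (hf h₁ hh₁) _ (hf h₂ hh₂), map_sub, map_smul]

theorem LinearIsometryEquiv.exists_add_symm_apply_map_eq {D : Set E} {T : E → E}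
    (hT : ∀ w, ∃ v ∈ D, v + T v = w) (V : E ≃ₗᵢ[ℂ] E) (w : E) :
    ∃ v, V v ∈ D ∧ v + V.symm (T (V v)) = w := by
  obtain ⟨v, hv, hvw⟩ := hT (V w)
  refine ⟨V.symm v, by rwa [V.apply_symm_apply], ?_⟩
  rw [V.apply_symm_apply, ← map_add, hvw, V.symm_apply_apply]

theorem stmt18_general {E : Type*} [NormedAddCommGroup E] [InnerProductSpace ℂ E]
    (H : Submodule ℝ E)
    (S : E → E)
    (hS : ∀ h₁ ∈ H, ∀ h₂ ∈ H, S (h₁ + Complex.I • h₂) = h₁ - Complex.I • h₂)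
    (J : E → E)
    (hJinv : ∀ x : E, J (J x) = x)
    (hpos : ∀ v ∈ (cspan H : Submodule ℝ E),
        0 ≤ (inner ℂ v (J (S v)) : ℂ).re ∧ (inner ℂ v (J (S v)) : ℂ).im = 0)
    (hsymm : ∀ v ∈ (cspan H : Submodule ℝ E), ∀ w ∈ (cspan H : Submodule ℝ E),
        (inner ℂ (J (S v)) w : ℂ) = inner ℂ v (J (S w)))
    (hran : ∀ w : E, ∃ v ∈ (cspan H : Submodule ℝ E), v + J (S v) = w)
    (V : E ≃ₗᵢ[ℂ] E) (hVH : ∀ h ∈ H, V h ∈ H)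
    (hVsym : ∀ x : E, V x = J (V.symm (J x))) :
    (∀ v ∈ (cspan H : Submodule ℝ E),
        V v ∈ (cspan H : Submodule ℝ E) ∧
        (V.trans V).symm (J (S v)) = V.symm (J (S (V v)))) ∧
    (∀ v : E, V v ∈ (cspan H : Submodule ℝ E) →
        ∀ w : E, V w ∈ (cspan H : Submodule ℝ E) →
          (inner ℂ (V.symm (J (S (V v)))) w : ℂ) = inner ℂ v (V.symm (J (S (V w))))) ∧
    (∀ v : E, V v ∈ (cspan H : Submodule ℝ E) →
        0 ≤ (inner ℂ v (V.symm (J (S (V v)))) : ℂ).re ∧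
          (inner ℂ v (V.symm (J (S (V v)))) : ℂ).im = 0) ∧
    (∀ w : E, ∃ v : E, V v ∈ (cspan H : Submodule ℝ E) ∧
        v + V.symm (J (S (V v))) = w) := by
  have hVJ : ∀ x, V.symm (J x) = J (V x) := fun x => by rw [hVsym, hJinv]
  have hVS : ∀ v ∈ cspan H, V (S v) = S (V v) :=
    fun v hv => map_comm_of_mapsTo hS V.toLinearEquiv.toLinearMap hVH hv
  refine ⟨fun v hv => ⟨map_mem_cspan_of_mapsTo V.toLinearEquiv.toLinearMap hVH hv, ?_⟩,
    fun v hv w hw => ?_, fun v hv => ?_, V.exists_add_symm_apply_map_eq hran⟩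
  · rw [V.symm_trans, LinearIsometryEquiv.trans_apply, hVJ, hVS v hv]
  · rw [V.symm.inner_map_eq_flip, V.symm_symm, ← V.inner_map_eq_flip]
    exact hsymm _ hv _ hw
  · rw [← V.inner_map_map, V.apply_symm_apply]
    exact hpos _ hv

/-- If `V` is a symmetric (`V = J V* J`) unitary endomorphism of `H` and `U = V²`, then
`B_U = U* Δ_H^{1/2} ⊆ V* Δ_H^{1/2} V`, and `V* Δ_H^{1/2} V` is positive and selfadjoint;
hence `B_U` has a positive selfadjoint extension. -/
theorem stmt18 {E : Type*} [NormedAddCommGroup E] [InnerProductSpace ℂ E] [CompleteSpace E]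
    (H : Submodule ℝ E) (hH : IsStandardSubspace H)
    (S : E → E)
    (hS : ∀ h₁ ∈ H, ∀ h₂ ∈ H, S (h₁ + Complex.I • h₂) = h₁ - Complex.I • h₂)
    (J : E → E)
    (hJadd : ∀ x y : E, J (x + y) = J x + J y)
    (hJsmul : ∀ (c : ℂ) (x : E), J (c • x) = (starRingEnd ℂ) c • J x)
    (hJinv : ∀ x : E, J (J x) = x)
    (hJinner : ∀ x y : E, (inner ℂ (J x) (J y) : ℂ) = inner ℂ y x)
    (hpos : ∀ v ∈ (cspan H : Submodule ℝ E),
        0 ≤ (inner ℂ v (J (S v)) : ℂ).re ∧ (inner ℂ v (J (S v)) : ℂ).im = 0)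
    (hsymm : ∀ v ∈ (cspan H : Submodule ℝ E), ∀ w ∈ (cspan H : Submodule ℝ E),
        (inner ℂ (J (S v)) w : ℂ) = inner ℂ v (J (S w)))
    (hran : ∀ w : E, ∃ v ∈ (cspan H : Submodule ℝ E), v + J (S v) = w)
    (V : E ≃ₗᵢ[ℂ] E) (hVH : ∀ h ∈ H, V h ∈ H)
    (hVsym : ∀ x : E, V x = J (V.symm (J x))) :
    (∀ v ∈ (cspan H : Submodule ℝ E),
        V v ∈ (cspan H : Submodule ℝ E) ∧
        (V.trans V).symm (J (S v)) = V.symm (J (S (V v)))) ∧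
    (∀ v : E, V v ∈ (cspan H : Submodule ℝ E) →
        ∀ w : E, V w ∈ (cspan H : Submodule ℝ E) →
          (inner ℂ (V.symm (J (S (V v)))) w : ℂ) = inner ℂ v (V.symm (J (S (V w))))) ∧
    (∀ v : E, V v ∈ (cspan H : Submodule ℝ E) →
        0 ≤ (inner ℂ v (V.symm (J (S (V v)))) : ℂ).re ∧
          (inner ℂ v (V.symm (J (S (V v)))) : ℂ).im = 0) ∧
    (∀ w : E, ∃ v : E, V v ∈ (cspan H : Submodule ℝ E) ∧
        v + V.symm (J (S (V v))) = w) :=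
  stmt18_general H S hS J hJinv hpos hsymm hran V hVH hVsym
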